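/- arXiv:2507.22476 — 5 statements merged into one kernel-verified Lean document; each statement's English description precedes it below -/
import Mathlib

section
/- If X is a nonempty compact Hausdorff space that has a π-base of cardinality at most ℵ₁, then X has a point that does not belong to any nowhere dense P-set of X. -/
/-!
Index the π-base by `ω₁` as `b : ω₁ → Set X`. Call `v ⊆ [0, δ)` a refinement below `δ` if
every `b γ` with `γ < δ` contains some `b α` with `α ∈ v`. Chaining refinements in increasing
order of `δ` shows that the closed sets `closure (⋃ α ∈ v, b α)` have the finite intersection
property, so by compactness some point `x` lies in all of them.

If `x` lay in a nowhere dense P-set `K`, regularity would give for each `γ` an index `h γ` with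
`closure (b (h γ)) ⊆ b γ` disjoint from `K`. Some `δ < ω₁` is closed under `h`, so
`h '' [0, δ)` is a countable refinement below `δ`; as `K` is a P-set, some neighbourhood of `K`
misses all the countably many closed sets `closure (b (h γ))`, whereas `x ∈ K` is in the closure
of their union.
-/

open Cardinal Set Function

/-- A subset `B` of a topological space is a P-set if the intersection of countably many
neighborhoods of `B` is again a neighborhood of `B`. -/
def IsPSet {X : Type*} [TopologicalSpace X] (B : Set X) : Prop :=
  ∀ U : ℕ → Set X, (∀ n, IsOpen (U n) ∧ B ⊆ U n) →
    ∃ V : Set X, IsOpen V ∧ B ⊆ V ∧ V ⊆ ⋂ n, U n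

section Omega1

variable {ι : Type*} [LinearOrder ι] [Uncountable ι]

theorem exists_subset_Iio_of_countable (hIio : ∀ i : ι, (Iio i).Countable) {s : Set ι}
    (hs : s.Countable) : ∃ j, s ⊆ Iio j := by
  by_contra! h
  have hcover : (univ : Set ι) ⊆ ⋃ x ∈ s, Iic x := fun j _ => by
    obtain ⟨x, hxs, hjx⟩ := not_subset.1 (h j)
    exact mem_biUnion hxs (not_lt.1 hjx)
  refine not_countable_univ ((hs.biUnion fun x _ => ?_).mono hcover)
  rw [← Iio_insert]
  exact (hIio x).insert x

theorem exists_mapsTo_Iio [WellFoundedLT ι] (hIio : ∀ i : ι, (Iio i).Countable) (h : ι → ι) :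
    ∃ δ, (Iio δ).Nonempty ∧ MapsTo h (Iio δ) (Iio δ) := by
  -- `δ` is the least strict upper bound of an orbit of `g`; `g i` bounds `i` and `h '' Iic i`.
  choose g hg using fun i =>
    exists_subset_Iio_of_countable hIio (((hIio i).insert i).image h |>.insert i)
  let t : ℕ → ι := fun n => g^[n] (Classical.arbitrary ι)
  obtain ⟨δ₀, hδ₀⟩ := exists_subset_Iio_of_countable hIio (countable_range t)
  obtain ⟨δ, hδ, hδ_min⟩ := wellFounded_lt.has_min {j | range t ⊆ Iio j} ⟨δ₀, hδ₀⟩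
  refine ⟨δ, ⟨t 0, hδ (mem_range_self 0)⟩, fun γ hγ => ?_⟩
  obtain ⟨n, hn⟩ : ∃ n, γ ≤ t n := by
    by_contra! hlt
    exact hδ_min γ (range_subset_iff.2 hlt) hγ
  have hγn : h γ < t (n + 1) := by
    rw [show t (n + 1) = g (t n) from iterate_succ_apply' g n _]
    refine hg (t n) (mem_insert_of_mem _ (mem_image_of_mem h ?_))
    rw [Iio_insert]
    exact hn
  exact hγn.trans (hδ (mem_range_self _))

end Omega1

theorem countable_Iio_toType_ord_aleph_one (i : (aleph 1 : Cardinal.{u}).ord.ToType) :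
    (Iio i).Countable := by
  have hi := mk_Iio_lt i (by simp)
  rw [mk_ord_toType, lt_aleph_one_iff] at hi
  exact le_aleph0_iff_set_countable.1 hi

instance : Uncountable (aleph 1 : Cardinal.{u}).ord.ToType :=
  aleph0_lt_mk_iff.1 (by rw [mk_ord_toType]; exact aleph0_lt_aleph_one)

section PiBase

variable {X ι : Type*} [TopologicalSpace X] {b : ι → Set X}

theorem exists_closure_subset_of_piBase [RegularSpace X]
    (hb : ∀ U, IsOpen U → U.Nonempty → ∃ i, b i ⊆ U) {U : Set X} (hU : IsOpen U)
    (hne : U.Nonempty) : ∃ i, closure (b i) ⊆ U := by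
  obtain ⟨z, hz⟩ := hne
  obtain ⟨V, hzV, hVc, hVU⟩ := exists_mem_nhds_isClosed_subset (hU.mem_nhds hz)
  obtain ⟨i, hi⟩ := hb (interior V) isOpen_interior ⟨z, mem_interior_iff_mem_nhds.2 hzV⟩
  exact ⟨i, (closure_mono hi).trans ((closure_minimal interior_subset hVc).trans hVU)⟩

theorem IsNowhereDense.exists_closure_subset_disjoint [RegularSpace X]
    (hb : ∀ U, IsOpen U → U.Nonempty → ∃ i, b i ⊆ U) {K : Set X} (hK : IsNowhereDense K)
    {U : Set X} (hU : IsOpen U) (hne : U.Nonempty) :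
    ∃ i, closure (b i) ⊆ U ∧ Disjoint (closure (b i)) K := by
  have hdiff : (U \ closure K).Nonempty :=
    (interior_eq_empty_iff_dense_compl.1 hK).inter_open_nonempty U hU hne
  obtain ⟨i, hi⟩ := exists_closure_subset_of_piBase hb (hU.sdiff isClosed_closure) hdiff
  exact ⟨i, hi.trans sdiff_subset, (subset_sdiff.1 hi).2.mono_right subset_closure⟩

end PiBase

section Refinement

variable {X ι : Type*} [LinearOrder ι] (b : ι → Set X)

-- Requiring `Iio δ` to be nonempty excludes the empty refinement below a minimal `δ`.
def IsRefinementBelow (δ : ι) (v : Set ι) : Prop :=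
  (Iio δ).Nonempty ∧ v ⊆ Iio δ ∧ ∀ γ < δ, ∃ α ∈ v, b α ⊆ b γ

theorem exists_subset_biUnion_of_isRefinementBelow {κ : Type*} [DecidableEq κ]
    {δ : κ → ι} {v : κ → Set ι} (hv : ∀ k, IsRefinementBelow b (δ k) (v k)) (u : Finset κ) :
    ∀ γ, (∀ k ∈ u, γ < δ k) → ∃ i, b i ⊆ b γ ∧ ∀ k ∈ u, b i ⊆ ⋃ α ∈ v k, b α := by
  induction u using Finset.induction_on_min_value δ with
  | empty => exact fun γ _ => ⟨γ, subset_rfl, by simp⟩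
  | insert k u _ hk_min ih =>
    intro γ hγ
    obtain ⟨α, hαv, hαγ⟩ := (hv k).2.2 γ (hγ k (Finset.mem_insert_self k u))
    obtain ⟨i, hiα, hi⟩ := ih α fun l hl => ((hv k).2.1 hαv).trans_le (hk_min l hl)
    refine ⟨i, hiα.trans hαγ, fun l hl => ?_⟩
    rcases Finset.mem_insert.1 hl with rfl | hl
    · exact hiα.trans (subset_biUnion_of_mem hαv)
    · exact hi l hl

theorem exists_forall_mem_closure_biUnion_of_isRefinementBelow [TopologicalSpace X]
    [CompactSpace X] [Nonempty X] (hbne : ∀ i, (b i).Nonempty) :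
    ∃ x, ∀ δ v, IsRefinementBelow b δ v → x ∈ closure (⋃ α ∈ v, b α) := by
  classical
  let J := {p : ι × Set ι // IsRefinementBelow b p.1 p.2}
  obtain ⟨x, hx⟩ := CompactSpace.iInter_nonempty (t := fun p : J => closure (⋃ α ∈ p.1.2, b α))
    (fun _ => isClosed_closure) fun u => by
      rcases u.eq_empty_or_nonempty with rfl | hu
      · simp
      obtain ⟨q, hq, hq_min⟩ := u.exists_min_image (fun p => p.1.1) hu
      obtain ⟨γ, hγ⟩ := q.2.1
      obtain ⟨i, -, hi⟩ := exists_subset_biUnion_of_isRefinementBelow b (fun p : J => p.2) u γ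
        fun p hp => lt_of_lt_of_le hγ (hq_min p hp)
      obtain ⟨y, hy⟩ := hbne i
      exact ⟨y, mem_iInter₂.2 fun p hp => subset_closure (hi p hp hy)⟩
  exact ⟨x, fun δ v hv => mem_iInter.1 hx ⟨(δ, v), hv⟩⟩

end Refinement

theorem IsPSet.disjoint_closure_biUnion {X κ : Type*} [TopologicalSpace X] {K : Set X}
    (hK : IsPSet K) {s : Set κ} (hs : s.Countable) {F : κ → Set X}
    (hF : ∀ k ∈ s, IsClosed (F k)) (hKF : ∀ k ∈ s, Disjoint K (F k)) :
    Disjoint K (closure (⋃ k ∈ s, F k)) := by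
  rcases s.eq_empty_or_nonempty with rfl | hne
  · simp
  obtain ⟨e, rfl⟩ := hs.exists_eq_range hne
  obtain ⟨V, hVo, hKV, hV⟩ := hK (fun n => (F (e n))ᶜ) fun n =>
    ⟨(hF _ (mem_range_self n)).isOpen_compl,
      subset_compl_iff_disjoint_right.2 (hKF _ (mem_range_self n))⟩
  refine (Disjoint.closure_right ?_ hVo).mono_left hKV
  simp only [disjoint_iUnion_right, forall_mem_range]
  exact fun n => subset_compl_iff_disjoint_right.1 (hV.trans (iInter_subset _ n))

theorem exists_forall_notMem_of_isPSet_of_piBase {X ι : Type*} [TopologicalSpace X]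
    [CompactSpace X] [RegularSpace X] [Nonempty X] [LinearOrder ι] [WellFoundedLT ι]
    [Uncountable ι] (hIio : ∀ i : ι, (Iio i).Countable) {b : ι → Set X}
    (hbo : ∀ i, IsOpen (b i)) (hbne : ∀ i, (b i).Nonempty)
    (hb : ∀ U, IsOpen U → U.Nonempty → ∃ i, b i ⊆ U) :
    ∃ x : X, ∀ K : Set X, IsNowhereDense K → IsPSet K → x ∉ K := by
  obtain ⟨x, hx⟩ := exists_forall_mem_closure_biUnion_of_isRefinementBelow b hbne
  refine ⟨x, fun K hK hKP hxK => ?_⟩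
  choose h hhb hhK using fun γ => hK.exists_closure_subset_disjoint hb (hbo γ) (hbne γ)
  obtain ⟨δ, hδ, hδh⟩ := exists_mapsTo_Iio hIio h
  have hv : IsRefinementBelow b δ (h '' Iio δ) :=
    ⟨hδ, hδh.image_subset, fun γ hγ => ⟨h γ, mem_image_of_mem h hγ, subset_closure.trans (hhb γ)⟩⟩
  have hKv : Disjoint K (closure (⋃ α ∈ h '' Iio δ, closure (b α))) :=
    hKP.disjoint_closure_biUnion ((hIio δ).image h) (fun _ _ => isClosed_closure)
      (forall_mem_image.2 fun γ _ => (hhK γ).symm)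
  exact disjoint_left.1 hKv hxK
    (closure_mono (iUnion₂_mono fun _ _ => subset_closure) (hx δ _ hv))

/-- If a nonempty compact Hausdorff space has a π-base of cardinality at most ℵ₁, then it
has a point that does not belong to any nowhere dense P-set. -/
theorem point_avoiding_nwd_Psets_of_small_pi_base (X : Type*) [TopologicalSpace X]
    [CompactSpace X] [T2Space X] [Nonempty X] (𝔅 : Set (Set X))
    (hopen : ∀ B ∈ 𝔅, IsOpen B ∧ B.Nonempty)
    (hbase : ∀ U : Set X, IsOpen U → U.Nonempty → ∃ B ∈ 𝔅, B ⊆ U)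
    (hcard : Cardinal.mk 𝔅 ≤ Cardinal.aleph 1) :
    ∃ x : X, ∀ B : Set X, IsNowhereDense B → IsPSet B → x ∉ B := by
  obtain ⟨B₀, hB₀, -⟩ := hbase univ isOpen_univ univ_nonempty
  obtain ⟨f, hf⟩ : ∃ f : (aleph 1).ord.ToType → 𝔅, Surjective f :=
    exists_surjective_iff.2 ⟨⟨fun _ => ⟨B₀, hB₀⟩⟩, (le_def _ _).1 (by rwa [mk_ord_toType])⟩
  refine exists_forall_notMem_of_isPSet_of_piBase countable_Iio_toType_ord_aleph_one
    (b := fun i => f i) (fun i => (hopen _ (f i).2).1) (fun i => (hopen _ (f i).2).2)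
    fun U hU hne => ?_
  obtain ⟨B, hB, hBU⟩ := hbase U hU hne
  obtain ⟨i, hi⟩ := hf ⟨B, hB⟩
  exact ⟨i, by rwa [hi]⟩
end

section
/- Assume the principle of Near Coherence of Filters (NCF): for any two nonprincipal ultrafilters U, V on ℕ there exists a finite-to-one map f : ℕ → ℕ (every fiber f⁻¹({n}) is finite) such that the pushforward ultrafilters f(U) and f(V) are equal. Then ω* can be covered by nowhere dense P-sets: ω* is the union of a family of subsets each of which is a nowhere dense P-set of ω*. -/
/-!
Under NCF there is a P-point `W`. Otherwise run a recursion of length `𝔡` along a dominating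
family: at stage `g` add a pair `(A, B)` of sets lying in blocks of an interval partition built
from `g`, two blocks apart, keeping both families centred modulo finite sets. The recursion
cannot get stuck: if it did, grouping the blocks in threes would produce a nonprincipal
ultrafilter generated by fewer than `𝔡` sets, a P-point by Ketonen's theorem. Ultrafilters
`U ⊇ {A}` and `V ⊇ {B}` then witness the failure of NCF: a finite-to-one `f` with
`f(U) = f(V)` keeps each of its fibres within adjacent blocks of every partition whose `g`
dominates the growth of those fibres.

Given `W`, NCF places every `u ∈ ω*` in the fibre `{u | f(u) = f(W)}` of some finite-to-one `f`.
These fibres are closed and nowhere dense, and they are P-sets because `f(W)` is a P-point.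
-/

open Set

/-- An ultrafilter is nonprincipal if it contains no finite set. -/
def Nonprincipal (U : Ultrafilter ℕ) : Prop := ∀ A : Set ℕ, A.Finite → A ∉ U

/-- `ω* = βℕ ∖ ℕ`: the space of nonprincipal ultrafilters on ℕ with the Stone topology
(as a subspace of the space of all ultrafilters on ℕ). -/
def OmegaStar : Type := {U : Ultrafilter ℕ // Nonprincipal U}

instance : TopologicalSpace OmegaStar := instTopologicalSpaceSubtype

open Filter

lemma nonprincipal_iff_le_cofinite {U : Ultrafilter ℕ} :
    Nonprincipal U ↔ (U : Filter ℕ) ≤ cofinite := by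
  refine ⟨fun h s hs => ?_, fun h A hA hAU => ?_⟩
  · simpa using Ultrafilter.compl_mem_iff_notMem.2 (h _ hs)
  · exact Ultrafilter.compl_mem_iff_notMem.1 (h hA.compl_mem_cofinite) hAU

lemma Nonprincipal.infinite_of_mem {U : Ultrafilter ℕ} (hU : Nonprincipal U) {s : Set ℕ}
    (hs : s ∈ U) : s.Infinite :=
  fun hfin => hU s hfin hs

lemma Nonprincipal.mem_of_diff_finite {U : Ultrafilter ℕ} (hU : Nonprincipal U) {s t : Set ℕ}
    (hs : s ∈ U) (hst : (s \ t).Finite) : t ∈ U := by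
  filter_upwards [hs, nonprincipal_iff_le_cofinite.1 hU hst.compl_mem_cofinite] with x hxs hxst
  by_contra hxt
  exact hxst ⟨hxs, hxt⟩

lemma Nonprincipal.Ici_mem {U : Ultrafilter ℕ} (hU : Nonprincipal U) (M : ℕ) : Ici M ∈ U :=
  nonprincipal_iff_le_cofinite.1 hU (Nat.cofinite_eq_atTop ▸ Ici_mem_atTop M)

lemma exists_nonprincipal_le {F : Filter ℕ} (hF : ∀ s ∈ F, s.Infinite) :
    ∃ U : Ultrafilter ℕ, Nonprincipal U ∧ (U : Filter ℕ) ≤ F := by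
  have : (F ⊓ cofinite).NeBot := inf_neBot_iff.2 fun s hs t ht =>
    ((hF s hs).sdiff (mem_cofinite.1 ht)).nonempty.mono fun x hx => ⟨hx.1, not_not.1 hx.2⟩
  exact ⟨Ultrafilter.of (F ⊓ cofinite),
    nonprincipal_iff_le_cofinite.2 ((Ultrafilter.of_le _).trans inf_le_right),
    (Ultrafilter.of_le _).trans inf_le_left⟩

lemma exists_nonprincipal_forall_mem {J : Type*} (a : J → Set ℕ)
    (ha : ∀ t : Finset J, (⋂ j ∈ t, a j).Infinite) :
    ∃ U : Ultrafilter ℕ, Nonprincipal U ∧ ∀ j, a j ∈ U := by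
  classical
  have hdir : Directed (· ≥ ·) fun t : Finset J => 𝓟 (⋂ j ∈ t, a j) :=
    Antitone.directed_ge fun t t' h => principal_mono.2 (biInter_subset_biInter_left h)
  obtain ⟨U, hU, hle⟩ := exists_nonprincipal_le (F := ⨅ t : Finset J, 𝓟 (⋂ j ∈ t, a j))
    fun s hs => by
      obtain ⟨t, ht⟩ := (mem_iInf_of_directed hdir s).1 hs
      exact (ha t).mono ht
  refine ⟨U, hU, fun j => hle (mem_iInf_of_mem {j} ?_)⟩
  simp

lemma finite_preimage_of_tendsto_cofinite {f : ℕ → ℕ} (hf : Tendsto f cofinite cofinite)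
    {s : Set ℕ} (hs : s.Finite) : (f ⁻¹' s).Finite :=
  have : TendstoCofinite f := ⟨hf⟩
  TendstoCofinite.finite_preimage f hs

def IsPPoint (p : Ultrafilter ℕ) : Prop :=
  ∀ S : ℕ → Set ℕ, (∀ n, S n ∈ p) → ∃ C ∈ p, ∀ n, (C \ S n).Finite

lemma IsPPoint.map {p : Ultrafilter ℕ} (hp : IsPPoint p) (f : ℕ → ℕ) : IsPPoint (p.map f) := by
  intro S hS
  obtain ⟨C, hC, hCS⟩ := hp (fun n => f ⁻¹' S n) hS
  refine ⟨f '' C, Ultrafilter.mem_map.2 (mem_of_superset hC (subset_preimage_image f C)),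
    fun n => ((hCS n).image f).subset ?_⟩
  rintro _ ⟨⟨x, hx, rfl⟩, hxS⟩
  exact ⟨x, ⟨hx, hxS⟩, rfl⟩

section DominatingNumber

open Cardinal

def Dominating (D : Set (ℕ → ℕ)) : Prop :=
  ∀ f : ℕ → ℕ, ∃ g ∈ D, f ≤ᶠ[atTop] g

lemma not_dominating_range_iff {J : Type*} {g : J → ℕ → ℕ} :
    ¬ Dominating (range g) ↔ ∃ f : ℕ → ℕ, ∀ j, ∃ᶠ k in atTop, g j k < f k := by
  simp only [Dominating, exists_range_iff, not_forall, not_exists, EventuallyLE, not_eventually,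
    not_le]

lemma not_dominating_of_countable {D : Set (ℕ → ℕ)} (hD : D.Countable) : ¬ Dominating D := by
  intro h
  obtain ⟨g₀, hg₀, -⟩ := h 0
  obtain ⟨e, rfl⟩ := hD.exists_eq_range ⟨g₀, hg₀⟩
  obtain ⟨_, ⟨i, rfl⟩, hi⟩ := h fun n => ∑ j ∈ Finset.range (n + 1), e j n + 1
  obtain ⟨n, hn, hin⟩ := (hi.and (eventually_ge_atTop i)).exists
  simp only at hn
  have : e i n ≤ ∑ j ∈ Finset.range (n + 1), e j n :=
    Finset.single_le_sum (f := fun j => e j n) (fun _ _ => Nat.zero_le _)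
      (Finset.mem_range.2 (Nat.lt_succ_of_le hin))
  omega

noncomputable def dominatingNumber : Cardinal :=
  sInf {c | ∃ D : Set (ℕ → ℕ), Dominating D ∧ #D = c}

local notation "𝔡" => dominatingNumber

lemma exists_dominating_mk_eq : ∃ D : Set (ℕ → ℕ), Dominating D ∧ #D = 𝔡 :=
  csInf_mem (s := {c | ∃ D : Set (ℕ → ℕ), Dominating D ∧ #D = c})
    ⟨_, univ, fun f => ⟨f, mem_univ f, Eventually.of_forall fun _ => le_rfl⟩, rfl⟩

lemma aleph0_lt_dominatingNumber : ℵ₀ < 𝔡 := by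
  obtain ⟨D, hD, hcard⟩ := exists_dominating_mk_eq
  by_contra! h
  rw [← hcard, mk_le_aleph0_iff, countable_coe_iff] at h
  exact not_dominating_of_countable h hD

lemma not_dominating_range_of_mk_lt {J : Type} (hJ : #J < 𝔡) (g : J → ℕ → ℕ) :
    ¬ Dominating (range g) := fun hD =>
  (mk_range_le.trans_lt hJ).not_ge (csInf_le (OrderBot.bddBelow _) ⟨_, hD, rfl⟩)

lemma mk_finset_le_max (J : Type*) : #(Finset J) ≤ max ℵ₀ #J := by
  classical
  exact (mk_le_of_surjective fun s : Finset J => ⟨s.toList, s.toList_toFinset⟩).trans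
    (mk_list_le_max J)

lemma exists_dominating_range : ∃ g : (𝔡).ord.ToType → ℕ → ℕ, Dominating (range g) := by
  obtain ⟨D, hD, hcard⟩ := exists_dominating_mk_eq
  obtain ⟨e⟩ : Nonempty ((𝔡).ord.ToType ≃ D) := Cardinal.eq.1 (by rw [mk_ord_toType, hcard])
  refine ⟨fun x => e x, fun f => ?_⟩
  obtain ⟨g, hg, hfg⟩ := hD f
  exact ⟨g, ⟨e.symm ⟨g, hg⟩, by simp⟩, hfg⟩

-- Ketonen's theorem
theorem isPPoint_of_base {H : Ultrafilter ℕ} (hH : Nonprincipal H) {J : Type*} (c : J → Set ℕ)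
    (hc : ∀ j, c j ∈ H) (hbase : ∀ S ∈ H, ∃ j, (c j \ S).Finite)
    (hJ : ∀ g : J → ℕ → ℕ, ¬ Dominating (range g)) : IsPPoint H := by
  intro S hS
  set T : ℕ → Set ℕ := fun k => ⋂ i ≤ k, S i
  have hT : ∀ k, T k ∈ H := fun k => (biInter_mem (finite_Iic k)).2 fun i _ => hS i
  have hTS : ∀ {i k}, i ≤ k → T k ⊆ S i := fun hik => biInter_subset_of_mem hik
  have hg : ∀ j k, ∃ m ∈ c j ∩ T k, k ≤ m := fun j k =>
    ((hH.infinite_of_mem (inter_mem (hc j) (hT k))).exists_gt k).imp fun _ h => ⟨h.1, h.2.le⟩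
  choose g hgc hgk using hg
  obtain ⟨f, hf⟩ := not_dominating_range_iff.1 (hJ g)
  set h : ℕ → ℕ := fun n => ∑ i ∈ Finset.range (n + 1), f i
  have h_mono : Monotone h := fun m n hmn =>
    Finset.sum_le_sum_of_subset (Finset.range_mono (Nat.succ_le_succ hmn))
  have hfh : ∀ n, f n ≤ h n := fun n =>
    Finset.single_le_sum (f := f) (fun _ _ => Nat.zero_le _) (Finset.self_mem_range_succ n)
  refine ⟨{x | ∀ k, h k ≤ x → x ∈ S k}, ?_, fun k => (finite_Iio (h k)).subset ?_⟩
  · by_contra hC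
    obtain ⟨j, hj⟩ := hbase _ (Ultrafilter.compl_mem_iff_notMem.2 hC)
    obtain ⟨M, hM⟩ := hj.bddAbove
    obtain ⟨k, hkM, hk⟩ := frequently_atTop.1 (hf j) (M + 1)
    have hgC : g j k ∈ c j \ {x | ∀ k, h k ≤ x → x ∈ S k}ᶜ := by
      refine ⟨(hgc j k).1, not_not.2 fun i hi => hTS ?_ (hgc j k).2⟩
      by_contra! hki
      have := (h_mono hki.le).trans hi
      have := hfh k
      omega
    have := hM hgC
    have := hgk j k
    omega
  · intro x hx
    by_contra! hkx
    exact hx.2 (hx.1 k (not_lt.1 hkx))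

def Separated (π : ℕ → ℕ) (A B : Set ℕ) : Prop :=
  ∀ a ∈ A, ∀ b ∈ B, π a + 2 ≤ π b ∨ π b + 2 ≤ π a

lemma mem_iInf_cofinite_inf_principal {J : Type*} [SemilatticeSup J] [Nonempty J]
    {b : J → Set ℕ} (hb : Antitone b) {S : Set ℕ} :
    S ∈ ⨅ j, cofinite ⊓ 𝓟 (b j) ↔ ∃ j, (b j \ S).Finite := by
  rw [mem_iInf_of_directed
    (Antitone.directed_ge fun j j' h => inf_le_inf_left _ (principal_mono.2 (hb h)))]
  refine exists_congr fun j => ?_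
  rw [mem_inf_principal, mem_cofinite]
  simp only [compl_ofPred, Classical.not_imp]
  rfl

lemma exists_residue_infinite {J : Type*} [SemilatticeSup J] {a : J → Set ℕ} (ha : Antitone a)
    (ha' : ∀ j, (a j).Infinite) (π : ℕ → ℕ) :
    ∃ θ, ∀ j, (a j ∩ {x | (π x + θ) % 3 = 1}).Infinite := by
  by_contra! h
  choose j hj using h
  refine ha' (j 0 ⊔ j 1 ⊔ j 2) (((hj 0).union ((hj 1).union (hj 2))).subset fun x hx => ?_)
  have h0 : x ∈ a (j 0) := ha (le_sup_left.trans le_sup_left) hx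
  have h1 : x ∈ a (j 1) := ha (le_sup_right.trans le_sup_left) hx
  have h2 : x ∈ a (j 2) := ha le_sup_right hx
  rcases (by omega : (π x + 0) % 3 = 1 ∨ (π x + 1) % 3 = 1 ∨ (π x + 2) % 3 = 1) with h | h | h
  exacts [Or.inl ⟨h0, h⟩, Or.inr (Or.inl ⟨h1, h⟩), Or.inr (Or.inr ⟨h2, h⟩)]

/-- If no separated pair can be added to `a`, `b`, then after grouping the blocks of `π` in
threes the images of the `b j` generate an ultrafilter modulo finite sets. -/
theorem exists_ultrafilter_base_of_forall_separated {J : Type*} [SemilatticeSup J]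
    {a b : J → Set ℕ} (ha : Antitone a) (hb : Antitone b) (ha' : ∀ j, (a j).Infinite)
    (hb' : ∀ j, (b j).Infinite) {π : ℕ → ℕ} (hπ : Tendsto π cofinite cofinite)
    (hstuck : ∀ A B, Separated π A B → ∃ j, (a j ∩ A).Finite ∨ (b j ∩ B).Finite) :
    ∃ H : Ultrafilter ℕ, Nonprincipal H ∧
      ∃ c : J → Set ℕ, (∀ j, c j ∈ H) ∧ ∀ S ∈ H, ∃ j, (c j \ S).Finite := by
  have : Nonempty J := (hstuck ∅ ∅ (by simp [Separated])).nonempty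
  obtain ⟨θ, hθ⟩ := exists_residue_infinite ha ha' π
  set σ : ℕ → ℕ := fun x => (π x + θ) / 3
  -- a block in the middle of a group in `D` is two blocks away from every group outside `D`
  have hsep : ∀ D : Set ℕ, Separated π {x | (π x + θ) % 3 = 1 ∧ σ x ∈ D} (σ ⁻¹' Dᶜ) := by
    rintro D x ⟨hx, hxD⟩ y hyD
    have : σ x ≠ σ y := fun h => hyD (h ▸ hxD)
    change (π x + θ) / 3 ≠ (π y + θ) / 3 at this
    omega
  set F := ⨅ j, cofinite ⊓ 𝓟 (b j)
  have hF : ∀ S, S ∈ F ↔ ∃ j, (b j \ S).Finite := fun S => mem_iInf_cofinite_inf_principal hb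
  have hF_empty : ∅ ∉ F := fun h => by
    obtain ⟨j, hj⟩ := (hF ∅).1 h
    exact hb' j (by simpa using hj)
  have hdich : ∀ D, σ ⁻¹' D ∉ F → σ ⁻¹' Dᶜ ∈ F := by
    intro D hD
    obtain ⟨j, hj | hj⟩ := hstuck _ _ (hsep D)
    · obtain ⟨j', hj' | hj'⟩ := hstuck _ _ (hsep Dᶜ)
      · refine absurd ((hj.union hj').subset fun x hx => ?_) (hθ (j ⊔ j'))
        by_cases hxD : σ x ∈ D
        · exact Or.inl ⟨ha le_sup_left hx.1, hx.2, hxD⟩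
        · exact Or.inr ⟨ha le_sup_right hx.1, hx.2, hxD⟩
      · exact (hF _).2 ⟨j', by rwa [Set.sdiff_eq, ← preimage_compl]⟩
    · exact absurd ((hF _).2 ⟨j, by rwa [Set.sdiff_eq, ← preimage_compl]⟩) hD
  let H : Ultrafilter ℕ := Ultrafilter.ofComplNotMemIff (map σ F) fun D =>
    ⟨fun h => by_contra fun hD => h (hdich D hD), fun hD hDc => hF_empty <| by
      simpa using inter_mem (mem_map.1 hD) (mem_map.1 hDc)⟩
  have hσ : Tendsto σ cofinite cofinite := by
    rw [Nat.cofinite_eq_atTop] at hπ ⊢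
    exact (Nat.tendsto_div_const_atTop (by norm_num)).comp
      (tendsto_atTop_mono (fun x => Nat.le_add_right _ θ) hπ)
  refine ⟨H, nonprincipal_iff_le_cofinite.2 ((map_mono ?_).trans hσ), fun j => σ '' b j,
    fun j => (hF _).2 ⟨j, by simp [sdiff_eq_empty.2 (subset_preimage_image σ (b j))]⟩,
    fun S hS => ?_⟩
  · exact (iInf_le _ (Classical.arbitrary J)).trans inf_le_left
  · obtain ⟨j, hj⟩ := (hF _).1 hS
    exact ⟨j, image_sdiff_preimage (f := σ) ▸ hj.image σ⟩

theorem exists_forall_finset_of_extend {ι β : Type*} [LinearOrder ι] [WellFoundedLT ι]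
    [Nonempty β] {P : Set β → Prop} (hP_empty : P ∅) (hP_anti : ∀ ⦃S T⦄, S ⊆ T → P T → P S)
    (ok : ι → β → Prop)
    (hext : ∀ x (F : Iio x → β), (∀ t : Finset (Iio x), P (F '' t)) →
      ∃ p, ok x p ∧ ∀ t : Finset (Iio x), P (insert p (F '' t))) :
    ∃ K : ι → β, (∀ x, ok x (K x)) ∧ ∀ t : Finset ι, P (K '' t) := by
  let K : ι → β := wellFounded_lt.fix fun x K' => Classical.epsilon fun p =>
    ok x p ∧ ∀ t : Finset (Iio x), P (insert p ((fun y : Iio x => K' y y.2) '' t))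
  have hK : ∀ x, K x = Classical.epsilon fun p =>
      ok x p ∧ ∀ t : Finset (Iio x), P (insert p ((fun y : Iio x => K y) '' t)) :=
    fun x => wellFounded_lt.fix_eq _ x
  have h_max : ∀ s : Set ι, s.Finite →
      (∀ z ∈ s, ∀ s' : Set ι, s'.Finite → s' ⊆ Iic z → P (K '' s')) → P (K '' s) := by
    intro s hs h
    rcases s.eq_empty_or_nonempty with rfl | hne
    · simpa using hP_empty
    · obtain ⟨z, hz, hmax⟩ := exists_max_image s id hs hne
      exact h z hz s hs hmax
  have key : ∀ x, ok x (K x) ∧ ∀ s : Set ι, s.Finite → s ⊆ Iic x → P (K '' s) := by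
    intro x
    induction x using WellFoundedLT.induction with | _ x ih => ?_
    have hprev : ∀ t : Finset (Iio x), P ((fun y : Iio x => K y) '' t) := fun t => by
      rw [← image_image]
      refine h_max _ (t.finite_toSet.image _) fun z hz => (ih z ?_).2
      obtain ⟨y, -, rfl⟩ := hz
      exact y.2
    have hspec := hK x ▸ Classical.epsilon_spec (hext x _ hprev)
    refine ⟨hspec.1, fun s hs hsx =>
      hP_anti ?_ (hspec.2 (hs.preimage Subtype.val_injective.injOn).toFinset)⟩
    rintro _ ⟨y, hy, rfl⟩
    rcases (hsx hy).eq_or_lt with rfl | hlt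
    · exact mem_insert _ _
    · exact mem_insert_of_mem _ ⟨⟨y, hlt⟩, by simpa using hy, rfl⟩
  exact ⟨K, fun x => (key x).1, fun t => h_max _ t.finite_toSet fun z _ => (key z).2⟩

def InfiniteInters (T : Set (Set ℕ × Set ℕ)) : Prop :=
  (⋂ q ∈ T, q.1).Infinite ∧ (⋂ q ∈ T, q.2).Infinite

theorem exists_separated_extension (hno : ∀ H : Ultrafilter ℕ, Nonprincipal H → ¬ IsPPoint H)
    {π : ℕ → ℕ} (hπ : Tendsto π cofinite cofinite) {I : Type} (hI : #I < 𝔡)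
    (F : I → Set ℕ × Set ℕ) (hF : ∀ t : Finset I, InfiniteInters (F '' t)) :
    ∃ p : Set ℕ × Set ℕ, Separated π p.1 p.2 ∧
      ∀ t : Finset I, InfiniteInters (insert p (F '' t)) := by
  classical
  by_contra! hext
  have hanti : ∀ e : Set ℕ × Set ℕ → Set ℕ, Antitone fun t : Finset I => ⋂ q ∈ F '' t, e q :=
    fun e t t' h => biInter_subset_biInter_left (image_mono (Finset.coe_subset.2 h))
  have hstuck : ∀ A B, Separated π A B →
      ∃ t : Finset I, ((⋂ q ∈ F '' t, q.1) ∩ A).Finite ∨ ((⋂ q ∈ F '' t, q.2) ∩ B).Finite := by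
    intro A B hAB
    obtain ⟨t, ht⟩ := hext (A, B) hAB
    simp only [InfiniteInters, biInter_insert, not_and_or, Set.not_infinite] at ht
    exact ⟨t, by rwa [inter_comm _ A, inter_comm _ B]⟩
  obtain ⟨H, hH, c, hc, hbase⟩ := exists_ultrafilter_base_of_forall_separated (hanti _) (hanti _)
    (fun t => (hF t).1) (fun t => (hF t).2) hπ hstuck
  exact hno H hH <| isPPoint_of_base hH c hc hbase <| not_dominating_range_of_mk_lt <|
    (mk_finset_le_max I).trans_lt (max_lt aleph0_lt_dominatingNumber hI)

def cutPoints (g : ℕ → ℕ) : ℕ → ℕ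
  | 0 => 0
  | k + 1 => max (cutPoints g k + 1) (g (cutPoints g k))

lemma strictMono_cutPoints (g : ℕ → ℕ) : StrictMono (cutPoints g) :=
  strictMono_nat_of_lt_succ fun _ => Nat.lt_of_lt_of_le (Nat.lt_succ_self _) (le_max_left _ _)

/-- The index `k` of the block `[cutPoints g k, cutPoints g (k + 1))` containing `x`. -/
def blockIdx (g : ℕ → ℕ) (x : ℕ) : ℕ := Nat.findGreatest (fun k => cutPoints g k ≤ x) x

lemma cutPoints_blockIdx_le (g : ℕ → ℕ) (x : ℕ) : cutPoints g (blockIdx g x) ≤ x :=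
  Nat.findGreatest_spec (P := fun k => cutPoints g k ≤ x) (m := 0) (Nat.zero_le x) (Nat.zero_le x)

lemma lt_cutPoints_blockIdx_succ (g : ℕ → ℕ) (x : ℕ) : x < cutPoints g (blockIdx g x + 1) := by
  by_contra! h
  exact Nat.findGreatest_is_greatest (Nat.lt_succ_self _)
    ((strictMono_cutPoints g).le_apply.trans h) h

lemma blockIdx_lt_of_lt {g : ℕ → ℕ} {x m : ℕ} (h : x < cutPoints g m) : blockIdx g x < m :=
  (strictMono_cutPoints g).lt_iff_lt.1 ((cutPoints_blockIdx_le g x).trans_lt h)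

lemma tendsto_blockIdx (g : ℕ → ℕ) : Tendsto (blockIdx g) cofinite cofinite := by
  rw [Nat.cofinite_eq_atTop, tendsto_atTop_atTop]
  exact fun k => ⟨cutPoints g k, fun x hx =>
    Nat.le_findGreatest ((strictMono_cutPoints g).le_apply.trans hx) hx⟩

lemma exists_fiber_bound {f : ℕ → ℕ} (hf : Tendsto f cofinite cofinite) :
    ∃ φ : ℕ → ℕ, ∀ x y m, x ≤ m → f x = f y → y < φ m :=
  ⟨fun m => sSup (f ⁻¹' (f '' Iic m)) + 1, fun x _ m hxm hxy => Nat.lt_succ_of_le <|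
    le_csSup (finite_preimage_of_tendsto_cofinite hf ((finite_Iic m).image f)).bddAbove
      ⟨x, hxm, hxy⟩⟩

lemma blockIdx_le_succ_of_eq {f g φ : ℕ → ℕ} (hφ : ∀ x y m, x ≤ m → f x = f y → y < φ m)
    {M : ℕ} (hM : ∀ m ≥ M, φ m ≤ g m) {x y : ℕ} (hx : M ≤ x) (hxy : f x = f y) :
    blockIdx g y ≤ blockIdx g x + 1 := by
  have hx' := lt_cutPoints_blockIdx_succ g x
  refine Nat.lt_succ_iff.1 (blockIdx_lt_of_lt ?_)
  calc y < φ (cutPoints g (blockIdx g x + 1)) := hφ x y _ hx'.le hxy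
    _ ≤ g (cutPoints g (blockIdx g x + 1)) := hM _ (hx.trans hx'.le)
    _ ≤ cutPoints g (blockIdx g x + 1 + 1) := le_max_right _ _

theorem not_separated_of_map_eq {f g φ : ℕ → ℕ} (hφ : ∀ x y m, x ≤ m → f x = f y → y < φ m)
    (hg : φ ≤ᶠ[atTop] g) {U V : Ultrafilter ℕ} (hU : Nonprincipal U) (hV : Nonprincipal V)
    (hUV : U.map f = V.map f) {A B : Set ℕ} (hA : A ∈ U) (hB : B ∈ V) :
    ¬ Separated (blockIdx g) A B := by
  obtain ⟨M, hM⟩ := eventually_atTop.1 hg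
  have hAB : f '' (A ∩ Ici M) ∩ f '' (B ∩ Ici M) ∈ U.map f :=
    inter_mem (image_mem_map (inter_mem hA (hU.Ici_mem M)))
      (hUV ▸ image_mem_map (inter_mem hB (hV.Ici_mem M)))
  obtain ⟨_, ⟨x, ⟨hxA, hxM⟩, rfl⟩, ⟨y, ⟨hyB, hyM⟩, hyx⟩⟩ := Ultrafilter.nonempty_of_mem hAB
  intro hsep
  have := blockIdx_le_succ_of_eq hφ hM hxM hyx.symm
  have := blockIdx_le_succ_of_eq hφ hM hyM hyx
  rcases hsep x hxA y hyB with h | h <;> omega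

theorem exists_not_nearly_coherent (hno : ∀ H : Ultrafilter ℕ, Nonprincipal H → ¬ IsPPoint H) :
    ∃ U V : Ultrafilter ℕ, Nonprincipal U ∧ Nonprincipal V ∧
      ∀ f : ℕ → ℕ, Tendsto f cofinite cofinite → U.map f ≠ V.map f := by
  obtain ⟨g, hg⟩ := exists_dominating_range
  obtain ⟨K, hK_sep, hK⟩ := exists_forall_finset_of_extend (P := InfiniteInters)
    (by simp [InfiniteInters, infinite_univ])
    (fun S T hST hT => ⟨hT.1.mono (biInter_subset_biInter_left hST),
      hT.2.mono (biInter_subset_biInter_left hST)⟩)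
    (fun x p => Separated (blockIdx (g x)) p.1 p.2)
    fun x => exists_separated_extension hno (tendsto_blockIdx (g x)) (by simpa using mk_Iio_lt x)
  obtain ⟨U, hU, hKU⟩ := exists_nonprincipal_forall_mem (fun x => (K x).1) fun t => by
    simpa [biInter_image] using (hK t).1
  obtain ⟨V, hV, hKV⟩ := exists_nonprincipal_forall_mem (fun x => (K x).2) fun t => by
    simpa [biInter_image] using (hK t).2
  refine ⟨U, V, hU, hV, fun f hf hUV => ?_⟩
  obtain ⟨φ, hφ⟩ := exists_fiber_bound hf
  obtain ⟨_, ⟨x, rfl⟩, hφg⟩ := hg φ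
  exact not_separated_of_map_eq hφ hφg hU hV hUV (hKU x) (hKV x) (hK_sep x)

theorem exists_isPPoint_of_ncf
    (ncf : ∀ U V : Ultrafilter ℕ, Nonprincipal U → Nonprincipal V →
      ∃ f : ℕ → ℕ, (∀ n : ℕ, (f ⁻¹' {n}).Finite) ∧ U.map f = V.map f) :
    ∃ W : Ultrafilter ℕ, Nonprincipal W ∧ IsPPoint W := by
  by_contra! hno
  obtain ⟨U, V, hU, hV, hUV⟩ := exists_not_nearly_coherent hno
  obtain ⟨f, hf, heq⟩ := ncf U V hU hV
  exact hUV f (Tendsto.cofinite_of_finite_preimage_singleton fun n => (hf n).to_subtype) heq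

end DominatingNumber

lemma Ultrafilter.continuous_map {α β : Type*} (f : α → β) :
    Continuous (Ultrafilter.map f : Ultrafilter α → Ultrafilter β) :=
  ultrafilterBasis_is_basis.continuous_iff.2 fun _ ⟨S, hS⟩ =>
    hS ▸ ultrafilter_isOpen_basic (f ⁻¹' S)

lemma isClosed_setOf_nonprincipal : IsClosed {U : Ultrafilter ℕ | Nonprincipal U} := by
  have : {U : Ultrafilter ℕ | Nonprincipal U} = ⋂ n, {U | {n}ᶜ ∈ U} := by
    ext U
    simp [nonprincipal_iff_le_cofinite, le_cofinite_iff_compl_singleton_mem]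
  exact this ▸ isClosed_iInter fun n => ultrafilter_isClosed_basic _

instance : CompactSpace OmegaStar :=
  isCompact_iff_compactSpace (s := {U : Ultrafilter ℕ | Nonprincipal U}) |>.1
    isClosed_setOf_nonprincipal.isCompact

lemma OmegaStar.isOpen_setOf_mem (A : Set ℕ) : IsOpen {u : OmegaStar | A ∈ u.1} :=
  (ultrafilter_isOpen_basic A).preimage continuous_subtype_val

lemma OmegaStar.exists_mem_subset_of_isOpen {O : Set OmegaStar} (hO : IsOpen O) {u : OmegaStar}
    (hu : u ∈ O) : ∃ A ∈ u.1, {v : OmegaStar | A ∈ v.1} ⊆ O := by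
  obtain ⟨O', hO', rfl⟩ := isOpen_induced_iff.1 hO
  obtain ⟨_, ⟨A, rfl⟩, huA, hAO⟩ := ultrafilterBasis_is_basis.exists_subset_of_mem_open hu hO'
  exact ⟨A, huA, fun v hv => hAO hv⟩

lemma OmegaStar.exists_subset_subset_of_isCompact {K O : Set OmegaStar} (hK : IsCompact K)
    (hO : IsOpen O) (hKO : K ⊆ O) :
    ∃ A : Set ℕ, K ⊆ {u | A ∈ u.1} ∧ {u | A ∈ u.1} ⊆ O := by
  choose! A hA hAO using fun (u : OmegaStar) (hu : u ∈ K) =>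
    exists_mem_subset_of_isOpen hO (hKO hu)
  obtain ⟨t, htK, ht, hKt⟩ := hK.elim_finite_subcover_image
    (c := fun u => {v : OmegaStar | A u ∈ v.1}) (fun u _ => isOpen_setOf_mem _)
    fun u hu => mem_biUnion hu (hA u hu)
  refine ⟨⋃ u ∈ t, A u, fun v hv => ?_, fun v hv => ?_⟩
  · obtain ⟨u, hut, hvu⟩ := mem_iUnion₂.1 (hKt hv)
    exact mem_of_superset hvu (subset_biUnion_of_mem hut)
  · obtain ⟨u, hut, hvu⟩ := (Ultrafilter.finite_biUnion_mem_iff ht).1 hv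
    exact hAO u (htK hut) hvu

lemma Set.Infinite.exists_infinite_subset_notMem {α : Type*} {S : Set α} (hS : S.Infinite)
    (p : Ultrafilter α) : ∃ C ⊆ S, C.Infinite ∧ C ∉ p := by
  obtain ⟨t, u, rfl, hdisj, hcard⟩ := hS.exists_union_disjoint_cardinal_eq_of_infinite
  have htu : t.Infinite ↔ u.Infinite := by
    simp only [← infinite_coe_iff, Cardinal.infinite_iff, hcard]
  have ht : t.Infinite := (infinite_union.1 hS).elim id htu.2
  by_cases htp : t ∈ p
  · refine ⟨u, subset_union_right, htu.1 ht, fun hup => ?_⟩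
    exact (Ultrafilter.nonempty_of_mem (inter_mem htp hup)).ne_empty hdisj.inter_eq
  · exact ⟨t, subset_union_left, ht, htp⟩

def fiber (f : ℕ → ℕ) (p : Ultrafilter ℕ) : Set OmegaStar := {u | u.1.map f = p}

lemma isClosed_fiber (f : ℕ → ℕ) (p : Ultrafilter ℕ) : IsClosed (fiber f p) :=
  isClosed_singleton.preimage ((Ultrafilter.continuous_map f).comp continuous_subtype_val)

theorem isNowhereDense_fiber {f : ℕ → ℕ} (hf : Tendsto f cofinite cofinite)
    (p : Ultrafilter ℕ) : IsNowhereDense (fiber f p) := by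
  rw [(isClosed_fiber f p).isNowhereDense_iff, eq_empty_iff_forall_notMem]
  intro u hu
  obtain ⟨A, hAu, hAp⟩ := OmegaStar.exists_mem_subset_of_isOpen isOpen_interior hu
  have hA : (f '' A).Infinite := fun h => u.2.infinite_of_mem hAu
    ((finite_preimage_of_tendsto_cofinite hf h).subset (subset_preimage_image f A))
  obtain ⟨C, hCA, hC, hCp⟩ := hA.exists_infinite_subset_notMem p
  have hAC : (A ∩ f ⁻¹' C).Infinite := fun h => hC <| (h.image f).subset fun n hn => by
    obtain ⟨a, ha, rfl⟩ := hCA hn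
    exact ⟨a, ⟨ha, hn⟩, rfl⟩
  obtain ⟨w, hw, hwAC⟩ := exists_nonprincipal_le fun s hs => hAC.mono (mem_principal.1 hs)
  have hw_int : (⟨w, hw⟩ : OmegaStar) ∈ interior (fiber f p) :=
    hAp (hwAC (mem_principal.2 inter_subset_left))
  have hwp : w.map f = p := (interior_subset hw_int : (⟨w, hw⟩ : OmegaStar) ∈ fiber f p)
  exact hCp (hwp ▸ hwAC (mem_principal.2 inter_subset_right))

lemma exists_mem_finite_preimage_diff {f : ℕ → ℕ} {p : Ultrafilter ℕ} {A : Set ℕ}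
    (h : fiber f p ⊆ {u | A ∈ u.1}) : ∃ S ∈ p, (f ⁻¹' S \ A).Finite := by
  by_contra! hS
  obtain ⟨w, hw, hwle⟩ := exists_nonprincipal_le (F := comap f p ⊓ 𝓟 Aᶜ) fun s hs => by
    obtain ⟨S, hSp, hSs⟩ := mem_comap.1 (mem_inf_principal.1 hs)
    exact (hS S hSp).mono fun x hx => hSs hx.1 hx.2
  have hwp : w.map f = p := Ultrafilter.coe_le_coe.1 <| by
    rw [Ultrafilter.coe_map]
    exact map_le_iff_le_comap.2 (hwle.trans inf_le_left)
  exact Ultrafilter.compl_mem_iff_notMem.1 (hwle (mem_inf_of_right (mem_principal_self _)))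
    (h (show (⟨w, hw⟩ : OmegaStar) ∈ fiber f p from hwp))

theorem isPSet_fiber {f : ℕ → ℕ} (hf : Tendsto f cofinite cofinite) {p : Ultrafilter ℕ}
    (hp : IsPPoint p) : IsPSet (fiber f p) := by
  intro U hU
  choose A hA hAU using fun n => OmegaStar.exists_subset_subset_of_isCompact
    (isClosed_fiber f p).isCompact (hU n).1 (hU n).2
  choose S hSp hSA using fun n => exists_mem_finite_preimage_diff (hA n)
  obtain ⟨C, hCp, hCS⟩ := hp S hSp
  refine ⟨{u | f ⁻¹' C ∈ u.1}, OmegaStar.isOpen_setOf_mem _, fun u (hu : u.1.map f = p) => ?_,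
    fun u hu => mem_iInter.2 fun n => hAU n (u.2.mem_of_diff_finite hu ?_)⟩
  · exact Ultrafilter.mem_map.1 (hu ▸ hCp)
  · refine ((finite_preimage_of_tendsto_cofinite hf (hCS n)).union (hSA n)).subset ?_
    intro x hx
    by_cases hxS : f x ∈ S n
    · exact Or.inr ⟨hxS, hx.2⟩
    · exact Or.inl ⟨hx.1, hxS⟩

/-- NCF implies that `ω*` can be covered by nowhere dense P-sets. -/
theorem ncf_implies_cover_by_nwd_Psets
    (ncf : ∀ U V : Ultrafilter ℕ, Nonprincipal U → Nonprincipal V →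
      ∃ f : ℕ → ℕ, (∀ n : ℕ, (f ⁻¹' {n}).Finite) ∧ U.map f = V.map f) :
    ∃ 𝒞 : Set (Set OmegaStar), (∀ B ∈ 𝒞, IsNowhereDense B ∧ IsPSet B) ∧ ⋃₀ 𝒞 = univ := by
  obtain ⟨W, hW, hWp⟩ := exists_isPPoint_of_ncf ncf
  refine ⟨{B | ∃ f : ℕ → ℕ, Tendsto f cofinite cofinite ∧ B = fiber f (W.map f)}, ?_, ?_⟩
  · rintro _ ⟨f, hf, rfl⟩
    exact ⟨isNowhereDense_fiber hf _, isPSet_fiber hf (hWp.map f)⟩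
  · refine eq_univ_of_forall fun u => ?_
    obtain ⟨f, hf, hfu⟩ := ncf u.1 W u.2 hW
    exact ⟨_, ⟨f, Tendsto.cofinite_of_finite_preimage_singleton fun n => (hf n).to_subtype, rfl⟩,
      hfu⟩
end

section
/- Assume CH. Then every tall P-ideal on ℕ contains an increasing tower: there is an increasing tower all of whose members belong to the ideal. -/
open Set

/-- `A ⊆* B`: `A` is almost contained in `B`, i.e. `A \ B` is finite. -/
def AlmostSubset (A B : Set ℕ) : Prop := (A \ B).Finite

/-- An ideal on ℕ: contains `∅`, does not contain `ℕ`, and is closed under subsets and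
finite unions. -/
def IsIdealFam (I : Set (Set ℕ)) : Prop :=
  ∅ ∈ I ∧ (univ : Set ℕ) ∉ I ∧ (∀ A B : Set ℕ, B ∈ I → A ⊆ B → A ∈ I) ∧
    ∀ A B : Set ℕ, A ∈ I → B ∈ I → A ∪ B ∈ I

/-- A P-ideal: an ideal in which every countable subfamily has a pseudounion belonging to
the ideal. -/
def IsPIdeal (I : Set (Set ℕ)) : Prop :=
  IsIdealFam I ∧ ∀ C : Set (Set ℕ), C.Countable → C ⊆ I →
    ∃ B ∈ I, ∀ A ∈ C, AlmostSubset A B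

/-- A family of sets is tall if every infinite subset of ℕ has infinite intersection with
some member of the family. -/
def IsTallFam (I : Set (Set ℕ)) : Prop :=
  ∀ A : Set ℕ, A.Infinite → ∃ B ∈ I, (A ∩ B).Infinite

/-- A filter on ℕ: contains `ℕ`, does not contain `∅`, and is closed under finite
intersections and supersets. -/
def IsFilterFam (F : Set (Set ℕ)) : Prop :=
  (univ : Set ℕ) ∈ F ∧ ∅ ∉ F ∧ (∀ A B : Set ℕ, A ∈ F → B ∈ F → A ∩ B ∈ F) ∧
    ∀ A B : Set ℕ, A ∈ F → A ⊆ B → B ∈ F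

/-- A P-filter: a filter in which every countable subfamily has an infinite
pseudointersection belonging to the filter. -/
def IsPFilterFam (F : Set (Set ℕ)) : Prop :=
  IsFilterFam F ∧ ∀ C : Set (Set ℕ), C.Countable → C ⊆ F →
    ∃ X ∈ F, X.Infinite ∧ ∀ A ∈ C, AlmostSubset X A

/-- A family of sets is nowhere dense (as a filter) if it has no infinite
pseudointersection. -/
def IsNwdFam (F : Set (Set ℕ)) : Prop :=
  ¬ ∃ X : Set ℕ, X.Infinite ∧ ∀ A ∈ F, AlmostSubset X A

/-- A (decreasing) tower: a `⊆*`-decreasing family of infinite subsets of ℕ indexed by an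
ordinal `κ`, with no infinite pseudointersection. -/
def IsTower (κ : Ordinal) (A : Ordinal → Set ℕ) : Prop :=
  (∀ α < κ, (A α).Infinite) ∧
  (∀ α β : Ordinal, α < β → β < κ → AlmostSubset (A β) (A α)) ∧
  ¬ ∃ X : Set ℕ, X.Infinite ∧ ∀ α < κ, AlmostSubset X (A α)

/-- An increasing tower: a `⊆*`-increasing family of infinite subsets of ℕ indexed by an
ordinal `κ` such that every infinite subset of ℕ has infinite intersection with some
member. -/
def IsIncTower (κ : Ordinal) (B : Ordinal → Set ℕ) : Prop :=
  (∀ α < κ, (B α).Infinite) ∧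
  (∀ α β : Ordinal, α < β → β < κ → AlmostSubset (B α) (B β)) ∧
  ∀ X : Set ℕ, X.Infinite → ∃ γ < κ, (B γ ∩ X).Infinite

/-!
By CH the infinite subsets of ℕ can be listed as `X α`, `α < ω₁`. Choose `B α ∈ I` by
recursion on `α < ω₁`: the countably many earlier `B β` have a pseudounion in `I` (P-ideal),
and adding a member of `I` that meets `X α` infinitely (tallness) gives `B α`. Every infinite
set is some `X γ`, hence meets `B γ` infinitely.
-/

open Cardinal
open scoped Ordinal

universe u v

lemma IsPIdeal.exists_almostSuperset_inter_infinite {I : Set (Set ℕ)} (hP : IsPIdeal I)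
    (htall : IsTallFam I) {C : Set (Set ℕ)} (hC : C.Countable) (hCI : C ⊆ I) {X : Set ℕ}
    (hX : X.Infinite) : ∃ S ∈ I, (X ∩ S).Infinite ∧ ∀ A ∈ C, AlmostSubset A S := by
  obtain ⟨U, hUI, hU⟩ := hP.2 C hC hCI
  obtain ⟨T, hTI, hXT⟩ := htall X hX
  exact ⟨U ∪ T, hP.1.2.2.2 U T hUI hTI, hXT.mono (inter_subset_inter_right X subset_union_right),
    fun A hA => (hU A hA).subset (sdiff_subset_sdiff_right subset_union_left)⟩

lemma Ordinal.countable_Iio_of_lt_omega_one {α : Ordinal.{u}} (hα : α < ω₁) :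
    (Iio α).Countable := by
  rw [← le_aleph0_iff_set_countable, Cardinal.mk_Iio_ordinal, lift_le_aleph0, ← Order.lt_succ_iff,
    succ_aleph0]
  exact lt_omega_iff_card_lt.mp hα

lemma two_power_aleph0_eq_aleph_one_lift (ch : (2 : Cardinal.{u}) ^ ℵ₀ = ℵ₁) :
    (2 : Cardinal.{v}) ^ ℵ₀ = ℵ₁ := by
  apply lift_injective.{u, v}
  simpa using congrArg lift.{v} ch

lemma exists_surjOn_Iio_of_lift_mk_le {β : Type v} [Nonempty β] {o : Ordinal.{u}}
    (h : lift.{u} #β ≤ lift.{v} o.card) : ∃ f : Ordinal.{u} → β, ∀ y, ∃ α < o, f α = y := by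
  have hle : lift.{u + 1} #β ≤ lift.{v} #(Iio o) := by
    simpa [mk_Iio_ordinal] using lift_le.{u + 1}.mpr h
  obtain ⟨j⟩ := lift_mk_le'.mp hle
  have hj : Function.Injective fun y => (j y : Ordinal) :=
    Subtype.val_injective.comp j.injective
  exact ⟨Function.invFun _, fun y => ⟨j y, (j y).2, Function.leftInverse_invFun hj y⟩⟩

noncomputable def idealTower (I : Set (Set ℕ)) (X : Ordinal.{u} → Set ℕ) :
    Ordinal.{u} → Set ℕ :=
  Ordinal.lt_wf.fix fun α prev => Classical.epsilon fun S =>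
    S ∈ I ∧ (X α ∩ S).Infinite ∧ ∀ β (hβ : β < α), AlmostSubset (prev β hβ) S

lemma idealTower_eq (I : Set (Set ℕ)) (X : Ordinal.{u} → Set ℕ) (α : Ordinal.{u}) :
    idealTower I X α = Classical.epsilon fun S =>
      S ∈ I ∧ (X α ∩ S).Infinite ∧ ∀ β < α, AlmostSubset (idealTower I X β) S :=
  Ordinal.lt_wf.fix_eq _ _

lemma idealTower_spec {I : Set (Set ℕ)} (hP : IsPIdeal I) (htall : IsTallFam I)
    {X : Ordinal.{u} → Set ℕ} (hX : ∀ α, (X α).Infinite) :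
    ∀ α < ω₁, idealTower I X α ∈ I ∧ (X α ∩ idealTower I X α).Infinite ∧
      ∀ β < α, AlmostSubset (idealTower I X β) (idealTower I X α) := by
  intro α
  induction α using WellFoundedLT.induction with
  | _ α IH =>
    intro hα
    have hprev : idealTower I X '' Iio α ⊆ I := by
      rintro _ ⟨β, hβ, rfl⟩
      exact (IH β hβ (hβ.trans hα)).1
    obtain ⟨S, hSI, hXS, hS⟩ := hP.exists_almostSuperset_inter_infinite htall
      ((Ordinal.countable_Iio_of_lt_omega_one hα).image _) hprev (hX α)
    have hex : ∃ S, S ∈ I ∧ (X α ∩ S).Infinite ∧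
        ∀ β < α, AlmostSubset (idealTower I X β) S :=
      ⟨S, hSI, hXS, fun β hβ => hS _ ⟨β, hβ, rfl⟩⟩
    rw [idealTower_eq]
    exact Classical.epsilon_spec hex

lemma exists_enum_infinite_of_CH (ch : (2 : Cardinal.{u}) ^ ℵ₀ = ℵ₁) :
    ∃ X : Ordinal.{v} → {Y : Set ℕ // Y.Infinite}, ∀ Y, ∃ α < ω₁, X α = Y := by
  have : Nonempty {Y : Set ℕ // Y.Infinite} := ⟨⟨univ, infinite_univ⟩⟩
  apply exists_surjOn_Iio_of_lift_mk_le
  rw [Ordinal.card_omega, lift_uzero, ← two_power_aleph0_eq_aleph_one_lift ch]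
  simpa using lift_le.{v}.mpr (mk_subtype_le (Set.Infinite (α := ℕ)))

/-- Under CH, every tall P-ideal on ℕ contains an increasing tower. -/
theorem tall_Pideal_contains_incTower_of_CH
    (ch : (2 : Cardinal) ^ Cardinal.aleph0 = Cardinal.aleph 1)
    (I : Set (Set ℕ)) (hP : IsPIdeal I) (htall : IsTallFam I) :
    ∃ (κ : Ordinal) (B : Ordinal → Set ℕ), IsIncTower κ B ∧ ∀ α < κ, B α ∈ I := by
  obtain ⟨X, hX⟩ := exists_enum_infinite_of_CH ch
  have hB := idealTower_spec hP htall fun α => (X α).2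
  refine ⟨ω₁, idealTower I fun α => (X α).1, ⟨fun α hα => (hB α hα).2.1.mono inter_subset_right,
    fun β α hβα hα => (hB α hα).2.2 β hβα, fun Y hY => ?_⟩, fun α hα => (hB α hα).1⟩
  obtain ⟨γ, hγ, hXγ⟩ := hX ⟨Y, hY⟩
  refine ⟨γ, hγ, ?_⟩
  simpa only [inter_comm, hXγ] using (hB γ hγ).2.1
end

section
/- Let δ ≥ 1 be an indecomposable ordinal, i.e., γ + δ = δ for every γ < δ. If the set {α : α < δ} is written as the union of finitely many sets A_0, …, A_n, then there is some i ≤ n such that A_i has order type δ (A_i is order isomorphic, as a linearly ordered set of ordinals, to δ). -/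
/-!
The order type of `s ∪ t` is at most the natural sum of the order types of `s` and `t`, because
`x ↦ type (s ∩ Iio x) ♯ type (t ∩ Iio x)` is strictly increasing on `s ∪ t`. An additively
indecomposable ordinal is `0` or `ω ^ e`, and `ω ^ e` is closed under `♯` (by induction on `e`,
computing `♯` digitwise in base `ω ^ v` for `v < e`). So if every piece had order type `< δ`, so
would their union `Iio δ`.
-/

open Order Set

namespace Ordinal

universe u v

/-- The natural (Hessenberg) sum. -/
noncomputable def nadd (a b : Ordinal.{u}) : Ordinal.{u} :=
  max (⨆ x : Iio a, succ (nadd x.1 b)) (⨆ x : Iio b, succ (nadd a x.1))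
termination_by (a, b)
decreasing_by
  · exact Prod.Lex.left _ _ x.2
  · exact Prod.Lex.right _ x.2

infixl:65 " ♯ " => Ordinal.nadd

variable {a a' b b' c d : Ordinal.{u}}

theorem nadd_le_iff : a ♯ b ≤ c ↔ (∀ a' < a, a' ♯ b < c) ∧ ∀ b' < b, a ♯ b' < c := by
  rw [nadd, max_le_iff, Ordinal.iSup_le_iff, Ordinal.iSup_le_iff]
  simp only [succ_le_iff, Subtype.forall, mem_Iio]

theorem nadd_lt_nadd_right (h : a < a') (b : Ordinal) : a ♯ b < a' ♯ b :=
  (nadd_le_iff.1 le_rfl).1 _ h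

theorem nadd_lt_nadd_left (h : b < b') (a : Ordinal) : a ♯ b < a ♯ b' :=
  (nadd_le_iff.1 le_rfl).2 _ h

theorem nadd_le_nadd_right (h : a ≤ a') (b : Ordinal) : a ♯ b ≤ a' ♯ b :=
  StrictMono.monotone (fun _ _ h ↦ nadd_lt_nadd_right h b) h

theorem nadd_le_nadd_left (h : b ≤ b') (a : Ordinal) : a ♯ b ≤ a ♯ b' :=
  StrictMono.monotone (fun _ _ h ↦ nadd_lt_nadd_left h a) h

theorem nadd_lt_nadd_of_lt_of_le (ha : a < a') (hb : b ≤ b') : a ♯ b < a' ♯ b' :=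
  (nadd_lt_nadd_right ha b).trans_le (nadd_le_nadd_left hb a')

theorem nadd_lt_nadd_of_le_of_lt (ha : a ≤ a') (hb : b < b') : a ♯ b < a' ♯ b' :=
  (nadd_le_nadd_right ha b).trans_lt (nadd_lt_nadd_left hb a')

theorem nadd_comm (a b : Ordinal) : a ♯ b = b ♯ a := by
  induction a using WellFoundedLT.induction generalizing b with | ind a IHa =>
  induction b using WellFoundedLT.induction with | ind b IHb =>
  refine le_antisymm (nadd_le_iff.2 ⟨fun a' h ↦ ?_, fun b' h ↦ ?_⟩)
    (nadd_le_iff.2 ⟨fun b' h ↦ ?_, fun a' h ↦ ?_⟩)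
  · rw [IHa a' h]; exact nadd_lt_nadd_left h b
  · rw [IHb b' h]; exact nadd_lt_nadd_right h a
  · rw [← IHb b' h]; exact nadd_lt_nadd_left h a
  · rw [← IHa a' h]; exact nadd_lt_nadd_right h b

theorem nadd_zero (a : Ordinal) : a ♯ 0 = a := by
  induction a using WellFoundedLT.induction with | ind a IH =>
  refine le_antisymm (nadd_le_iff.2 ⟨fun a' h ↦ by rwa [IH a' h], fun _ h ↦ (not_lt_bot h).elim⟩)
    (StrictMono.id_le (fun _ _ h ↦ nadd_lt_nadd_right h 0) a)

theorem zero_nadd (a : Ordinal) : 0 ♯ a = a := by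
  rw [nadd_comm, nadd_zero]

theorem nadd_succ (a b : Ordinal) : a ♯ succ b = succ (a ♯ b) := by
  induction a using WellFoundedLT.induction with | ind a IH =>
  refine le_antisymm (nadd_le_iff.2 ⟨fun a' h ↦ ?_, fun b' h ↦ ?_⟩)
    (succ_le_of_lt (nadd_lt_nadd_left (lt_succ b) a))
  · rw [IH a' h, succ_lt_succ_iff]
    exact nadd_lt_nadd_right h b
  · exact lt_succ_of_le (nadd_le_nadd_left (le_of_lt_succ h) a)

theorem nadd_natCast (a : Ordinal) (n : ℕ) : a ♯ n = a + n := by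
  induction n with
  | zero => simp [nadd_zero]
  | succ n ih =>
    rw [Nat.cast_succ, ← add_assoc, ← ih, ← succ_eq_add_one, ← succ_eq_add_one, nadd_succ]

theorem isPrincipal_nadd_omega0 : IsPrincipal (· ♯ ·) ω := by
  intro a b ha hb
  obtain ⟨n, rfl⟩ := lt_omega0.1 hb
  show a ♯ n < ω
  rw [nadd_natCast]
  exact isPrincipal_add_omega0 ha hb

theorem div_lt_div_or_mod_lt_mod {x x' : Ordinal} (h : x' < x) (d : Ordinal) :
    x' / d < x / d ∨ x' / d = x / d ∧ x' % d < x % d := by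
  rcases (div_le_left h.le d).lt_or_eq with hdiv | hdiv
  · exact Or.inl hdiv
  · refine Or.inr ⟨hdiv, ?_⟩
    rw [← div_add_mod x' d, ← div_add_mod x d, hdiv] at h
    exact (add_lt_add_iff_left _).1 h

theorem mul_add_lt_mul_succ {r : Ordinal} (hr : r < d) (a : Ordinal) : d * a + r < d * succ a := by
  rw [mul_succ]
  exact add_lt_add_right hr _

theorem mul_div_nadd_add_mod_nadd_lt (hd0 : d ≠ 0) (hd : IsPrincipal (· ♯ ·) d) {x x' : Ordinal}
    (h : x' < x) (y : Ordinal) :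
    d * (x' / d ♯ y / d) + (x' % d ♯ y % d) < d * (x / d ♯ y / d) + (x % d ♯ y % d) := by
  rcases div_lt_div_or_mod_lt_mod h d with hdiv | ⟨hdiv, hmod⟩
  · calc d * (x' / d ♯ y / d) + (x' % d ♯ y % d)
        < d * succ (x' / d ♯ y / d) := mul_add_lt_mul_succ (hd (mod_lt _ hd0) (mod_lt _ hd0)) _
      _ ≤ d * (x / d ♯ y / d) := mul_le_mul_right (succ_le_of_lt (nadd_lt_nadd_right hdiv _)) _
      _ ≤ _ := le_self_add
  · rw [hdiv]
    exact add_lt_add_right (nadd_lt_nadd_right hmod _) _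

theorem nadd_le_mul_div_nadd_add_mod_nadd (hd0 : d ≠ 0) (hd : IsPrincipal (· ♯ ·) d)
    (x y : Ordinal) : x ♯ y ≤ d * (x / d ♯ y / d) + (x % d ♯ y % d) := by
  induction x using WellFoundedLT.induction generalizing y with | ind x IHx =>
  induction y using WellFoundedLT.induction with | ind y IHy =>
  refine nadd_le_iff.2 ⟨fun x' h ↦ (IHx x' h y).trans_lt ?_, fun y' h ↦ (IHy y' h).trans_lt ?_⟩
  · exact mul_div_nadd_add_mod_nadd_lt hd0 hd h y
  · simpa only [nadd_comm] using mul_div_nadd_add_mod_nadd_lt hd0 hd h x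

theorem IsPrincipal.nadd_mul_omega0 (hd0 : d ≠ 0) (hd : IsPrincipal (· ♯ ·) d) :
    IsPrincipal (· ♯ ·) (d * ω) := by
  intro a b ha hb
  have hdiv : a / d ♯ b / d < ω :=
    isPrincipal_nadd_omega0 ((lt_mul_iff_div_lt hd0).1 ha) ((lt_mul_iff_div_lt hd0).1 hb)
  calc a ♯ b ≤ d * (a / d ♯ b / d) + (a % d ♯ b % d) :=
        nadd_le_mul_div_nadd_add_mod_nadd hd0 hd a b
    _ < d * succ (a / d ♯ b / d) := mul_add_lt_mul_succ (hd (mod_lt _ hd0) (mod_lt _ hd0)) _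
    _ ≤ d * ω := mul_le_mul_right (succ_le_of_lt hdiv) _

theorem isPrincipal_nadd_omega0_opow (e : Ordinal) : IsPrincipal (· ♯ ·) (ω ^ e) := by
  induction e using WellFoundedLT.induction with | ind e IH =>
  intro a b ha hb
  rcases eq_or_ne a 0 with rfl | ha0
  · simpa only [zero_nadd]
  rcases eq_or_ne b 0 with rfl | hb0
  · simpa only [nadd_zero]
  set v := max (log ω a) (log ω b)
  have hv : v < e := max_lt ((lt_opow_iff_log_lt one_lt_omega0 ha0).1 ha)
    ((lt_opow_iff_log_lt one_lt_omega0 hb0).1 hb)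
  have hlt : ∀ x, log ω x ≤ v → x < ω ^ v * ω := fun x hx ↦ by
    rw [← opow_succ]
    exact (lt_opow_succ_log_self one_lt_omega0 x).trans_le
      (opow_le_opow_right omega0_pos (succ_le_succ hx))
  calc a ♯ b < ω ^ v * ω := (IH v hv).nadd_mul_omega0 (opow_ne_zero _ omega0_ne_zero)
        (hlt a (le_max_left _ _)) (hlt b (le_max_right _ _))
    _ = ω ^ succ v := (opow_succ _ _).symm
    _ ≤ ω ^ e := opow_le_opow_right omega0_pos (succ_le_of_lt hv)

theorem IsPrincipal.nadd_of_add {o : Ordinal} (ho : IsPrincipal (· + ·) o) :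
    IsPrincipal (· ♯ ·) o := by
  rcases isPrincipal_add_iff_zero_or_omega0_opow.1 ho with rfl | ⟨e, rfl⟩
  · exact isPrincipal_zero
  · exact isPrincipal_nadd_omega0_opow e

theorem IsPrincipal.add_lift {o : Ordinal.{u}} (ho : IsPrincipal (· + ·) o) :
    IsPrincipal (· + ·) (lift.{v} o) := by
  intro a b ha hb
  obtain ⟨a, -, rfl⟩ := lt_lift_iff.1 ha
  obtain ⟨b, -, rfl⟩ := lt_lift_iff.1 hb
  dsimp only
  rw [← lift_add, lift_lt]
  exact ho (lift_lt.1 ha) (lift_lt.1 hb)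

section WellOrder

variable {α : Type u} [LinearOrder α] [WellFoundedLT α]

theorem type_le_of_strictMono {f : α → Ordinal.{u}} (hf : StrictMono f) {c : Ordinal.{u}}
    (hc : ∀ x, f x < c) : typeLT α ≤ c := by
  have := lift_type_le.{u, u + 1, 0}.2 ⟨(OrderEmbedding.ofStrictMono
    (fun x ↦ (⟨f x, hc x⟩ : Iio c)) fun _ _ h ↦ hf h).ltEmbedding.collapse⟩
  rwa [type_lt_Iio, lift_lift, lift_le] at this

theorem type_set_le_of_subset {s t : Set α} (h : s ⊆ t) : typeLT s ≤ typeLT t :=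
  (OrderEmbedding.ofStrictMono (inclusion h) fun _ _ ↦ id).ltEmbedding.ordinal_type_le

theorem type_inter_Iio_lt {s : Set α} {x : α} (hx : x ∈ s) : typeLT ↥(s ∩ Iio x) < typeLT s := by
  let e : ↥(s ∩ Iio x) ≃o Iio (⟨x, hx⟩ : s) :=
    { toFun z := ⟨⟨z, z.2.1⟩, z.2.2⟩
      invFun z := ⟨z, z.1.2, z.2⟩
      map_rel_iff' := Iff.rfl }
  rw [e.ordinalType_congr, type_Iio_lt]
  exact typein_lt_type _ _

theorem type_inter_Iio_lt_of_lt {s : Set α} {x y : α} (hx : x ∈ s) (h : x < y) :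
    typeLT ↥(s ∩ Iio x) < typeLT ↥(s ∩ Iio y) := by
  have := type_inter_Iio_lt (s := s ∩ Iio y) ⟨hx, h⟩
  rwa [inter_assoc, Iio_inter_Iio, min_eq_right h.le] at this

theorem type_union_le_nadd (s t : Set α) : typeLT ↥(s ∪ t) ≤ typeLT s ♯ typeLT t := by
  refine type_le_of_strictMono (f := fun x ↦ typeLT ↥(s ∩ Iio x.1) ♯ typeLT ↥(t ∩ Iio x.1))
    (fun x y h ↦ ?_) fun x ↦ ?_
  · change x.1 < y.1 at h
    have hIio : Iio x.1 ⊆ Iio y.1 := Iio_subset_Iio h.le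
    rcases x.2 with hs | ht
    · exact nadd_lt_nadd_of_lt_of_le (type_inter_Iio_lt_of_lt hs h)
        (type_set_le_of_subset (inter_subset_inter_right t hIio))
    · exact nadd_lt_nadd_of_le_of_lt (type_set_le_of_subset (inter_subset_inter_right s hIio))
        (type_inter_Iio_lt_of_lt ht h)
  · rcases x.2 with hs | ht
    · exact nadd_lt_nadd_of_lt_of_le (type_inter_Iio_lt hs)
        (type_set_le_of_subset inter_subset_left)
    · exact nadd_lt_nadd_of_le_of_lt (type_set_le_of_subset inter_subset_left)
        (type_inter_Iio_lt ht)

theorem type_iUnion_lt {ι : Type*} [Finite ι] {o : Ordinal} (ho : IsPrincipal (· ♯ ·) o)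
    (ho0 : o ≠ 0) {s : ι → Set α} (hs : ∀ i, typeLT (s i) < o) : typeLT ↥(⋃ i, s i) < o := by
  classical
  have := Fintype.ofFinite ι
  suffices ∀ F : Finset ι, typeLT ↥(⋃ i ∈ F, s i) < o by
    rw [show ⋃ i, s i = ⋃ i ∈ Finset.univ, s i by simp]
    exact this Finset.univ
  intro F
  induction F using Finset.induction_on with
  | empty =>
    rw [show ⋃ i ∈ (∅ : Finset ι), s i = ∅ by simp]
    simpa using ho0.bot_lt
  | insert i F _ ih =>
    rw [Finset.set_biUnion_insert]
    exact (type_union_le_nadd _ _).trans_lt (ho (hs i) ih)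

end WellOrder

end Ordinal

open Ordinal

/-- If `δ ≥ 1` is an indecomposable ordinal and `{α | α < δ}` is split into finitely many
pieces, then one of the pieces is order isomorphic to `δ` (i.e. to `{α | α < δ}`). -/
theorem indecomposable_partition (δ : Ordinal) (hδ : 1 ≤ δ)
    (hind : ∀ γ < δ, γ + δ = δ) (n : ℕ) (A : Fin (n + 1) → Set Ordinal)
    (hcov : ⋃ i, A i = Set.Iio δ) :
    ∃ i : Fin (n + 1), Nonempty (↥(A i) ≃o ↥(Set.Iio δ)) := by
  by_contra! hA
  have hprincipal : IsPrincipal (· ♯ ·) (typeLT ↥(Iio δ)) := by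
    rw [type_lt_Iio]
    exact (isPrincipal_add_iff_add_left_eq_self.2 hind).add_lift.nadd_of_add
  have hne : typeLT ↥(Iio δ) ≠ 0 :=
    type_ne_zero_iff_nonempty.2 ⟨⟨0, Order.one_le_iff_pos.1 hδ⟩⟩
  have hlt (i : Fin (n + 1)) : typeLT ↥(A i) < typeLT ↥(Iio δ) :=
    (type_set_le_of_subset (hcov ▸ subset_iUnion A i)).lt_of_ne fun h ↦
      (hA i).false (OrderIso.ofRelIsoLT (type_eq.1 h).some)
  have hunion := type_iUnion_lt hprincipal hne hlt
  rw [hcov] at hunion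
  exact hunion.false
end

section
/- If {B_α : α < κ} is an increasing tower all of whose members are coinfinite (have infinite complement in ℕ), then the ideal on ℕ generated by the tower—namely the family of all sets A ⊆ ℕ that are contained in a union of finitely many members of the tower—is a tall P-ideal. -/
open Set

/-- The ideal generated by an increasing tower of coinfinite sets is a tall P-ideal. -/
theorem incTower_generates_tall_Pideal (κ : Ordinal) (B : Ordinal → Set ℕ)
    (hT : IsIncTower κ B) (hco : ∀ α < κ, (B α)ᶜ.Infinite) :
    IsPIdeal {A : Set ℕ | ∃ s : Finset Ordinal, (∀ α ∈ s, α < κ) ∧ A ⊆ ⋃ α ∈ s, B α} ∧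
    IsTallFam {A : Set ℕ | ∃ s : Finset Ordinal, (∀ α ∈ s, α < κ) ∧ A ⊆ ⋃ α ∈ s, B α} := by
  obtain ⟨hinf, hmono, htall⟩ := hT
  set I := {A : Set ℕ | ∃ s : Finset Ordinal, (∀ α ∈ s, α < κ) ∧ A ⊆ ⋃ α ∈ s, B α} with hIdef
  obtain ⟨γ₀, hγ₀, -⟩ := htall univ infinite_univ
  have hmono' : ∀ α β : Ordinal, α ≤ β → β < κ → (B α \ B β).Finite := by
    intro α β hle hβ
    rcases eq_or_lt_of_le hle with rfl | h
    · simp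
    · exact hmono α β h hβ
  have hkey : ∀ A ∈ I, ∃ γ < κ, (A \ B γ).Finite := by
    intro A hA
    obtain ⟨s, hs, hsub⟩ := hA
    rcases s.eq_empty_or_nonempty with rfl | hne
    · refine ⟨γ₀, hγ₀, ?_⟩
      simp only [Finset.notMem_empty, iUnion_of_empty, iUnion_empty,
        subset_empty_iff] at hsub
      simp [hsub]
    · have hmax := hs _ (s.max'_mem hne)
      refine ⟨s.max' hne, hmax, ?_⟩
      have hss : A \ B (s.max' hne) ⊆ ⋃ α ∈ s, (B α \ B (s.max' hne)) := by
        intro x hx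
        have hx1 := hsub hx.1
        simp only [mem_iUnion] at hx1 ⊢
        obtain ⟨α, hα, hxα⟩ := hx1
        exact ⟨α, hα, hxα, hx.2⟩
      refine Set.Finite.subset ?_ hss
      apply Set.Finite.biUnion s.finite_toSet
      intro α hα
      exact hmono' α _ (s.le_max' α hα) hmax
  have hBI : ∀ γ, γ < κ → B γ ∈ I := by
    intro γ hγ
    exact ⟨{γ}, by simpa using hγ, by simp⟩
  have hIdeal : IsIdealFam I := by
    refine ⟨⟨∅, by simp, by simp⟩, ?_, ?_, ?_⟩
    · intro huniv
      obtain ⟨γ, hγ, hfin⟩ := hkey univ huniv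
      refine hco γ hγ (hfin.subset ?_)
      intro x hx
      exact ⟨trivial, hx⟩
    · rintro A A' ⟨s, hs, hsub⟩ hAA'
      exact ⟨s, hs, hAA'.trans hsub⟩
    · rintro A A' ⟨s, hs, hsub⟩ ⟨t, ht, htsub⟩
      refine ⟨s ∪ t, ?_, ?_⟩
      · intro α hα
        rcases Finset.mem_union.1 hα with h | h
        · exact hs α h
        · exact ht α h
      · rintro x (hx | hx)
        · have := hsub hx
          simp only [mem_iUnion] at this ⊢
          obtain ⟨α, hα, hxα⟩ := this
          exact ⟨α, Finset.mem_union_left _ hα, hxα⟩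
        · have := htsub hx
          simp only [mem_iUnion] at this ⊢
          obtain ⟨α, hα, hxα⟩ := this
          exact ⟨α, Finset.mem_union_right _ hα, hxα⟩
  refine ⟨⟨hIdeal, ?_⟩, ?_⟩
  · intro C hC hCI
    rcases C.eq_empty_or_nonempty with rfl | hne
    · exact ⟨∅, hIdeal.1, by simp⟩
    obtain ⟨f, rfl⟩ := hC.exists_eq_range hne
    choose γ hγκ hγfin using fun n => hkey (f n) (hCI (mem_range_self n))
    by_cases hbdd : ∃ δ, δ < κ ∧ ∀ n, γ n ≤ δ
    · obtain ⟨δ, hδ, hub⟩ := hbdd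
      refine ⟨B δ, hBI δ hδ, ?_⟩
      rintro A ⟨n, rfl⟩
      have h2 : (B (γ n) \ B δ).Finite := hmono' _ _ (hub n) hδ
      refine ((hγfin n).union h2).subset ?_
      intro x hx
      by_cases hxB : x ∈ B (γ n)
      · exact Or.inr ⟨hxB, hx.2⟩
      · exact Or.inl ⟨hx.1, hxB⟩
    · exfalso
      push_neg at hbdd
      -- hbdd : ∀ δ, δ < κ → ∃ n, δ < γ n
      have hUc : ∀ n : ℕ, ((⋃ i ∈ Finset.range (n+1), B (γ i))ᶜ).Infinite := by
        intro n
        obtain ⟨j, hj, hjmax⟩ := (Finset.range (n+1)).exists_max_image γ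
          ⟨0, Finset.mem_range.2 (Nat.succ_pos n)⟩
        have hfin : ((⋃ i ∈ Finset.range (n+1), B (γ i)) \ B (γ j)).Finite := by
          refine Set.Finite.subset ?_ (?_ : _ ⊆ ⋃ i ∈ Finset.range (n+1), (B (γ i) \ B (γ j)))
          · apply Set.Finite.biUnion (Finset.range (n+1)).finite_toSet
            intro i hi
            exact hmono' _ _ (hjmax i hi) (hγκ j)
          · intro x hx
            have hx1 := hx.1
            simp only [mem_iUnion] at hx1 ⊢
            obtain ⟨i, hi, hxi⟩ := hx1
            exact ⟨i, hi, hxi, hx.2⟩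
        refine Set.Infinite.mono ?_ ((hco (γ j) (hγκ j)).diff hfin)
        intro x hx
        intro hxU
        exact hx.2 ⟨hxU, hx.1⟩
      have hx : ∀ n : ℕ, ∃ y, y ∈ (⋃ i ∈ Finset.range (n+1), B (γ i))ᶜ ∧ n < y := by
        intro n
        obtain ⟨y, hy, hny⟩ := (hUc n).exists_gt n
        exact ⟨y, hy, hny⟩
      choose x hxU hxgt using hx
      have hXinf : (Set.range x).Infinite := by
        intro hfin
        obtain ⟨b, hb⟩ := hfin.bddAbove
        exact absurd (hb (mem_range_self (b+1))) (by have := hxgt (b+1); omega)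
      obtain ⟨γ', hγ', hint⟩ := htall (Set.range x) hXinf
      obtain ⟨n, hn⟩ := hbdd γ' hγ'
      refine hint (Set.Finite.subset (((Set.finite_Iio n).image x).union
        (hmono γ' (γ n) hn (hγκ n))) ?_)
      rintro y ⟨hyB, m, rfl⟩
      by_cases hmn : m < n
      · exact Or.inl ⟨m, hmn, rfl⟩
      · refine Or.inr ⟨hyB, fun hyn => hxU m ?_⟩
        simp only [mem_iUnion]
        exact ⟨n, Finset.mem_range.2 (by omega), hyn⟩
  · intro A hA
    obtain ⟨γ, hγ, hint⟩ := htall A hA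
    exact ⟨B γ, hBI γ hγ, by rwa [inter_comm]⟩
end
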